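/- Let p be a prime, q = p^r, m ≥ 1, and β ∈ 𝔽_{q^m}. Suppose either d = −1, or d = 3 with p = 2 and r odd. Then Σ_{v ∈ 𝔽_q^*} e(vβ) · Σ_{u ∈ 𝔽_q^*} S_d^{(m)}(u, v) = S · Σ_{u ∈ 𝔽_q^*} S_d^{(m)}(1, u), where S = q − 1 if Tr_{𝔽_{q^m}/𝔽_q}(β) = 0 and S = −1 if Tr_{𝔽_{q^m}/𝔽_q}(β) ≠ 0. In particular, if Tr_{𝔽_{q^m}/𝔽_q}(β₁) = 0 then N_{m,d}(β₁) = N_{m,d}(0), and if Tr_{𝔽_{q^m}/𝔽_q}(β₂) ≠ 0 then N_{m,d}(β₂) − (q^m + 1) = −(N_{m,d}(0) − (q^m + 1))/(q − 1), where N_{m,d}(β) − (q^m + 1) = Σ_{v ∈ 𝔽_q^*} e(vβ) Σ_{u ∈ 𝔽_q^*} S_d^{(m)}(u, v). -/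

import Mathlib

/-!
Rescaling `z ↦ u z` gives `S_d(u, v) = S_d(1, v u^{-d})`. When `x ↦ x^d` permutes `𝔽_q^*`
(always for `d = -1`; for `d = 3` because `3 ∤ 2^r - 1` when `r` is odd), the inner sum over
`u ∈ 𝔽_q^*` is therefore the same for every `v ≠ 0`, and the double sum factors through
`Σ_{v ≠ 0} e(vβ)`. By transitivity of the trace, `e(vβ) = χ(v · Tr_{𝔽_{q^m}/𝔽_q}(β))` with `χ`
primitive, so orthogonality makes this factor `q - 1` or `-1`.
-/

open Finset

/-- The canonical additive character of a finite field `E` of characteristic `p`: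
`e(x) = exp(2πi · Tr_{E/𝔽_p}(x) / p)`. -/
noncomputable def addChar (p : ℕ) (E : Type) [Field E] [Fintype E] [Algebra (ZMod p) E]
    (x : E) : ℂ :=
  Complex.exp (2 * Real.pi * Complex.I * ((Algebra.trace (ZMod p) E x).val : ℂ) / p)

/-- The sum `S_d^{(m)}(u,v)`, where `z` runs over `𝔽_{q^m}^*` if `d = -1` and over all of
`𝔽_{q^m}` if `d = 3`: `S_d^{(m)}(u,v) = Σ_z e(uz + vz^d)`. -/
noncomputable def Sd (p : ℕ) (F E : Type) [Field F] [Fintype F] [Field E] [Fintype E]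
    [DecidableEq E] [Algebra (ZMod p) E] [Algebra F E] (d : ℤ) (u v : F) : ℂ :=
  ∑ z ∈ Finset.univ.filter (fun z : E => z ≠ 0 ∨ d = 3),
    addChar p E (algebraMap F E u * z + algebraMap F E v * z ^ d)

/-- The double sum `Σ_{v ∈ 𝔽_q^*} e(vβ) Σ_{u ∈ 𝔽_q^*} S_d^{(m)}(u,v)`, which equals
`N_{m,d}(β) - (q^m + 1)`. -/
noncomputable def dblSum (p : ℕ) (F E : Type) [Field F] [Fintype F] [DecidableEq F]
    [Field E] [Fintype E] [DecidableEq E] [Algebra (ZMod p) E] [Algebra F E]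
    (d : ℤ) (β : E) : ℂ :=
  ∑ v ∈ Finset.univ.filter (fun v : F => v ≠ 0),
    addChar p E (algebraMap F E v * β) *
      ∑ u ∈ Finset.univ.filter (fun u : F => u ≠ 0), Sd p F E d u v

lemma sum_filter_ne_zero_eq_sum_units {G₀ M : Type*} [GroupWithZero G₀] [Fintype G₀]
    [DecidableEq G₀] [AddCommMonoid M] (f : G₀ → M) :
    ∑ x ∈ univ.filter (· ≠ 0), f x = ∑ u : G₀ˣ, f u := by
  rw [Finset.sum_subtype _ (p := (· ≠ 0)) (fun x => by simp)]
  exact (Fintype.sum_equiv unitsEquivNeZero (fun u : G₀ˣ => f u) (fun x => f x) fun _ => rfl).symm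

section TraceCharacter

variable (p : ℕ) [Fact p.Prime]

noncomputable def traceAddChar (K : Type*) [Field K] [Fintype K] [Algebra (ZMod p) K] :
    AddChar K ℂ :=
  ZMod.stdAddChar.compAddMonoidHom (Algebra.trace (ZMod p) K).toAddMonoidHom

lemma addChar_eq_traceAddChar (K : Type) [Field K] [Fintype K] [Algebra (ZMod p) K] (x : K) :
    addChar p K x = traceAddChar p K x := by
  simp [addChar, traceAddChar, ZMod.stdAddChar_apply, ZMod.toCircle_apply]

lemma isPrimitive_traceAddChar (K : Type*) [Field K] [Fintype K] [Algebra (ZMod p) K] :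
    (traceAddChar p K).IsPrimitive := by
  refine AddChar.IsPrimitive.of_ne_one fun h => ?_
  obtain ⟨c, hc⟩ := Algebra.trace_surjective (ZMod p) K 1
  have h1 : ZMod.stdAddChar (1 : ZMod p) = ZMod.stdAddChar (0 : ZMod p) := by
    simpa [traceAddChar, hc] using DFunLike.congr_fun h c
  exact one_ne_zero (ZMod.injective_stdAddChar h1)

variable (F E : Type) [Field F] [Fintype F] [Field E] [Fintype E] [Algebra (ZMod p) F]
  [Algebra (ZMod p) E] [Algebra F E] [IsScalarTower (ZMod p) F E]

lemma traceAddChar_algebraMap_mul (v : F) (β : E) :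
    traceAddChar p E (algebraMap F E v * β) = traceAddChar p F (v * Algebra.trace F E β) := by
  simp only [traceAddChar, AddChar.compAddMonoidHom_apply, LinearMap.toAddMonoidHom_coe]
  rw [← Algebra.trace_trace (S := F), ← Algebra.smul_def, map_smul, smul_eq_mul]

lemma sum_addChar_algebraMap_mul [DecidableEq F] (β : E) :
    ∑ v : F, addChar p E (algebraMap F E v * β) =
      if Algebra.trace F E β = 0 then (Fintype.card F : ℂ) else 0 := by
  simp only [addChar_eq_traceAddChar, traceAddChar_algebraMap_mul]
  exact_mod_cast AddChar.sum_mulShift _ (isPrimitive_traceAddChar p F)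

end TraceCharacter

section Reduction

variable (p : ℕ) (F E : Type) [Field F] [Fintype F] [Field E] [Fintype E] [DecidableEq E]
  [Algebra (ZMod p) E] [Algebra F E]

lemma Sd_eq_Sd_one_mul_zpow (d : ℤ) {u : F} (hu : u ≠ 0) (v : F) :
    Sd p F E d u v = Sd p F E d 1 (v * u ^ (-d)) := by
  have hc : algebraMap F E u ≠ 0 := (map_ne_zero _).2 hu
  refine Finset.sum_equiv (Equiv.mulLeft₀ _ hc) (fun _ => by simp [hc]) fun _ _ => ?_
  simp only [Equiv.mulLeft₀_apply, map_one, one_mul, map_mul, zpow_neg, map_inv₀, map_zpow₀,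
    mul_zpow]
  field_simp

lemma sum_Sd_eq_sum_Sd_one [DecidableEq F] {d : ℤ}
    (hd : Function.Bijective (fun x : Fˣ => x ^ d)) {v : F} (hv : v ≠ 0) :
    ∑ u ∈ univ.filter (fun u : F => u ≠ 0), Sd p F E d u v =
      ∑ u ∈ univ.filter (fun u : F => u ≠ 0), Sd p F E d 1 u := by
  rw [sum_filter_ne_zero_eq_sum_units, sum_filter_ne_zero_eq_sum_units]
  calc ∑ u : Fˣ, Sd p F E d u v
      = ∑ u : Fˣ, Sd p F E d 1 ↑(Units.mk0 v hv * (u ^ d)⁻¹) := by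
        refine Finset.sum_congr rfl fun u _ => ?_
        rw [Sd_eq_Sd_one_mul_zpow p F E d u.ne_zero]
        simp [zpow_neg]
    _ = ∑ u : Fˣ, Sd p F E d 1 u :=
        Fintype.sum_bijective _ ((Equiv.mulLeft _).bijective.comp (inv_bijective.comp hd)) _ _
          fun _ => rfl

end Reduction

lemma dblSum_eq_mul_sum_Sd_one (p : ℕ) [Fact p.Prime] (F E : Type) [Field F] [Fintype F]
    [DecidableEq F] [Field E] [Fintype E] [DecidableEq E] [Algebra (ZMod p) F]
    [Algebra (ZMod p) E] [Algebra F E] [IsScalarTower (ZMod p) F E] {d : ℤ}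
    (hd : Function.Bijective (fun x : Fˣ => x ^ d)) (β : E) :
    dblSum p F E d β = ((if Algebra.trace F E β = 0 then (Fintype.card F : ℂ) else 0) - 1) *
      ∑ u ∈ univ.filter (fun u : F => u ≠ 0), Sd p F E d 1 u := by
  have h0 : addChar p E (algebraMap F E 0 * β) = 1 := by
    rw [addChar_eq_traceAddChar, map_zero, zero_mul, AddChar.map_zero_eq_one]
  rw [dblSum, ← sum_addChar_algebraMap_mul p F E β, ← h0, ← sum_erase_eq_sub (mem_univ 0),
    ← filter_ne', sum_mul]
  exact sum_congr rfl fun v hv => by rw [sum_Sd_eq_sum_Sd_one p F E hd (mem_filter.1 hv).2]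

lemma Nat.coprime_two_pow_sub_one_three {r : ℕ} (hr : Odd r) : Nat.Coprime (2 ^ r - 1) 3 := by
  obtain ⟨k, rfl⟩ := hr
  have hmod : 2 ^ (2 * k + 1) % 3 = 2 := by
    rw [pow_succ, pow_mul, Nat.mul_mod, Nat.pow_mod]
    norm_num
  rw [Nat.coprime_comm, Nat.Prime.coprime_iff_not_dvd Nat.prime_three]
  generalize 2 ^ (2 * k + 1) = x at hmod ⊢
  omega

theorem dblSum_eq_S_mul_general
    (p r : ℕ) (hp : p.Prime)
    (d : ℤ) (hd : d = -1 ∨ (d = 3 ∧ p = 2 ∧ Odd r))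
    (F E : Type) [Field F] [Fintype F] [DecidableEq F] [Field E] [Fintype E] [DecidableEq E]
    [Algebra (ZMod p) E] [Algebra F E]
    (hF : Fintype.card F = p ^ r)
    (β β₁ β₂ : E) (hβ₁ : Algebra.trace F E β₁ = 0) (hβ₂ : Algebra.trace F E β₂ ≠ 0) :
    dblSum p F E d β =
      (if Algebra.trace F E β = 0 then ((p : ℂ) ^ r - 1) else -1) *
        ∑ u ∈ Finset.univ.filter (fun u : F => u ≠ 0), Sd p F E d 1 u ∧
    dblSum p F E d β₁ = dblSum p F E d 0 ∧
    dblSum p F E d β₂ = -(dblSum p F E d 0) / ((p : ℂ) ^ r - 1) := by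
  have : Fact p.Prime := ⟨hp⟩
  have : CharP F p := charP_of_card_eq_prime_pow hF
  let : Algebra (ZMod p) F := ZMod.algebra F p
  have : IsScalarTower (ZMod p) F E := .of_algebraMap_eq' (Subsingleton.elim _ _)
  have hpow : Function.Bijective (fun x : Fˣ => x ^ d) := by
    rcases hd with rfl | ⟨rfl, rfl, hr⟩
    · simpa only [zpow_neg_one] using inv_bijective
    · have hcop : (Nat.card Fˣ).Coprime 3 := by
        rw [Nat.card_units, Nat.card_eq_fintype_card, hF]
        exact Nat.coprime_two_pow_sub_one_three hr
      simpa only [zpow_ofNat] using hcop.pow_left_bijective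
  have hq : (Fintype.card F : ℂ) = (p : ℂ) ^ r := by rw [hF, Nat.cast_pow]
  have hq1 : (p : ℂ) ^ r - 1 ≠ 0 := by
    rw [← hq, sub_ne_zero]
    exact_mod_cast Fintype.one_lt_card.ne'
  simp only [dblSum_eq_mul_sum_Sd_one p F E hpow, hq, hβ₁, hβ₂, map_zero, if_true, if_false,
    true_and]
  exact ⟨by split_ifs <;> ring, by field_simp; ring⟩

/-- Let `p` be a prime, `q = p^r`, `m ≥ 1`, `β ∈ 𝔽_{q^m}`, and suppose `d = -1`, or
`d = 3` with `p = 2` and `r` odd.  Then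
`Σ_{v ∈ 𝔽_q^*} e(vβ) Σ_{u ∈ 𝔽_q^*} S_d^{(m)}(u,v) = S · Σ_{u ∈ 𝔽_q^*} S_d^{(m)}(1,u)`,
where `S = q - 1` if `Tr_{𝔽_{q^m}/𝔽_q}(β) = 0` and `S = -1` otherwise.  In particular,
if `Tr(β₁) = 0` then `N_{m,d}(β₁) = N_{m,d}(0)`, and if `Tr(β₂) ≠ 0` then
`N_{m,d}(β₂) - (q^m+1) = -(N_{m,d}(0) - (q^m+1))/(q-1)`, in terms of the double sums. -/
theorem dblSum_eq_S_mul
    (p r m : ℕ) (hp : p.Prime) (hr : 0 < r) (hm : 0 < m)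
    (d : ℤ) (hd : d = -1 ∨ (d = 3 ∧ p = 2 ∧ Odd r))
    (F E : Type) [Field F] [Fintype F] [DecidableEq F] [Field E] [Fintype E] [DecidableEq E]
    [Algebra (ZMod p) E] [Algebra F E]
    (hF : Fintype.card F = p ^ r) (hE : Fintype.card E = (p ^ r) ^ m)
    (β β₁ β₂ : E) (hβ₁ : Algebra.trace F E β₁ = 0) (hβ₂ : Algebra.trace F E β₂ ≠ 0) :
    dblSum p F E d β =
      (if Algebra.trace F E β = 0 then ((p : ℂ) ^ r - 1) else -1) *
        ∑ u ∈ Finset.univ.filter (fun u : F => u ≠ 0), Sd p F E d 1 u ∧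
    dblSum p F E d β₁ = dblSum p F E d 0 ∧
    dblSum p F E d β₂ = -(dblSum p F E d 0) / ((p : ℂ) ^ r - 1) :=
  dblSum_eq_S_mul_general p r hp d hd F E hF β β₁ β₂ hβ₁ hβ₂
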